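/- arXiv:2107.09327 — 3 statements merged into one kernel-verified Lean document; each statement's English description precedes it below -/
import Mathlib

section
/- Let r ≥ 2 be a power of a prime and let k, m be positive integers satisfying (r^k − 1)/(r − 1) = m / gcd(m, r − 1). Then k is the smallest positive integer such that r^k ≡ 1 (mod m), i.e., k is the multiplicative order of r modulo m. -/
theorem stmt3 (r k m : ℕ) (hr : IsPrimePow r) (hk : 0 < k) (hm : 0 < m)
    (h : (r ^ k - 1) * Nat.gcd m (r - 1) = m * (r - 1)) :
    orderOf (r : ZMod m) = k := by
  haveI : NeZero m := ⟨hm.ne'⟩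
  have hr2 : 2 ≤ r := hr.two_le
  obtain ⟨c, hc⟩ : Nat.gcd m (r - 1) ∣ r - 1 := Nat.gcd_dvd_right _ _
  have hdpos : 0 < Nat.gcd m (r - 1) := Nat.gcd_pos_of_pos_left _ hm
  have hkey : r ^ k - 1 = m * c := by
    have h' : (r ^ k - 1) * Nat.gcd m (r - 1) = (m * c) * Nat.gcd m (r - 1) := by
      rw [h]; conv_lhs => rw [hc]
      ring
    exact Nat.eq_of_mul_eq_mul_right hdpos h'
  have hrk1 : 1 ≤ r ^ k := Nat.one_le_pow _ _ (by omega)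
  have h1 : (r : ZMod m) ^ k = 1 := by
    have h0 : ((r ^ k - 1 : ℕ) : ZMod m) = 0 :=
      (ZMod.natCast_eq_zero_iff _ _).mpr ⟨c, hkey⟩
    rwa [Nat.cast_sub hrk1, Nat.cast_pow, Nat.cast_one, sub_eq_zero] at h0
  set e := orderOf (r : ZMod m) with hedef
  have hef : IsOfFinOrder (r : ZMod m) := isOfFinOrder_iff_pow_eq_one.mpr ⟨k, hk, h1⟩
  have hepos : 0 < e := hef.orderOf_pos
  have hedvd : e ∣ k := orderOf_dvd_of_pow_eq_one h1
  have hre1 : 1 ≤ r ^ e := Nat.one_le_pow _ _ (by omega)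
  have hmd : m ∣ r ^ e - 1 := by
    have h0 : ((r ^ e - 1 : ℕ) : ZMod m) = 0 := by
      rw [Nat.cast_sub hre1, Nat.cast_pow, Nat.cast_one, sub_eq_zero]
      exact pow_orderOf_eq_one _
    exact (ZMod.natCast_eq_zero_iff _ _).mp h0
  have hre2 : 2 ≤ r ^ e := by
    calc 2 = 2 ^ 1 := rfl
    _ ≤ r ^ e := Nat.pow_le_pow_left hr2 1 |>.trans (Nat.pow_le_pow_right (by omega) hepos)
  have hme : m + 1 ≤ r ^ e := by
    have := Nat.le_of_dvd (by omega) hmd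
    omega
  have hek : e ≤ k := Nat.le_of_dvd hk hedvd
  rcases eq_or_lt_of_le hek with heq | hlt
  · exact heq
  · exfalso
    have hcr : c + 1 ≤ r := by
      have : c ≤ Nat.gcd m (r - 1) * c := Nat.le_mul_of_pos_left c hdpos
      omega
    have hpow : r ^ (e + 1) ≤ r ^ k := Nat.pow_le_pow_right (by omega) (by omega)
    have hmul : (m + 1) * (c + 1) ≤ r ^ e * r := Nat.mul_le_mul hme hcr
    rw [← pow_succ] at hmul
    have hrk : r ^ k = m * c + 1 := by omega
    nlinarith
end

section
/- Let q be a prime, m a positive integer, and C a nonzero cyclic code of length m over F_q of dimension k. Then the group G(C) ≤ Sym(Z_q × Z_m) generated by α and all β_c (c ∈ C) is transitive on Z_q × Z_m and has order m·q^k; consequently every point stabilizer has order q^{k−1}. -/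
/-- The permutation of `ZMod q × ZMod m` given by `(i, j) ↦ (i + c j, j)`. -/
def beta {q m : ℕ} (c : ZMod m → ZMod q) : Equiv.Perm (ZMod q × ZMod m) where
  toFun p := (p.1 + c p.2, p.2)
  invFun p := (p.1 - c p.2, p.2)
  left_inv p := by cases p; simp
  right_inv p := by cases p; simp

/-- The permutation of `ZMod q × ZMod m` given by `(i, j) ↦ (i, j + 1)`. -/
def alpha {q m : ℕ} : Equiv.Perm (ZMod q × ZMod m) where
  toFun p := (p.1, p.2 + 1)
  invFun p := (p.1, p.2 - 1)
  left_inv p := by cases p; simp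
  right_inv p := by cases p; simp

/-- The permutation group generated by `alpha` together with `beta c` for codewords `c ∈ C`. -/
def GC (q m : ℕ) (C : Submodule (ZMod q) (ZMod m → ZMod q)) :
    Subgroup (Equiv.Perm (ZMod q × ZMod m)) :=
  Subgroup.closure ({alpha} ∪ (fun c : ZMod m → ZMod q => beta c) '' ↑C)

/-- `(i,j) ↦ (i + c j, j + t)`. -/
def pct {q m : ℕ} (c : ZMod m → ZMod q) (t : ZMod m) : Equiv.Perm (ZMod q × ZMod m) where
  toFun p := (p.1 + c p.2, p.2 + t)
  invFun p := (p.1 - c (p.2 - t), p.2 - t)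
  left_inv p := by cases p; simp
  right_inv p := by cases p; simp

lemma pct_apply {q m : ℕ} (c : ZMod m → ZMod q) (t : ZMod m) (p : ZMod q × ZMod m) :
    pct c t p = (p.1 + c p.2, p.2 + t) := rfl

lemma beta_eq_pct {q m : ℕ} (c : ZMod m → ZMod q) : beta c = pct c 0 := by
  ext p <;> simp [beta, pct]

lemma alpha_eq_pct {q m : ℕ} : (alpha : Equiv.Perm (ZMod q × ZMod m)) = pct 0 1 := by
  ext p <;> simp [alpha, pct]

lemma pct_mul {q m : ℕ} (c c' : ZMod m → ZMod q) (t t' : ZMod m) :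
    pct c t * pct c' t' = pct (fun j => c' j + c (j + t')) (t' + t) := by
  apply Equiv.ext
  intro p
  simp [Equiv.Perm.mul_apply, pct_apply, add_assoc, add_comm t' t]

lemma pct_one {q m : ℕ} : (pct (0 : ZMod m → ZMod q) 0) = 1 := by
  ext p <;> simp [pct]

lemma pct_injective2 {q m : ℕ} (c c' : ZMod m → ZMod q) (t t' : ZMod m)
    (h : pct c t = pct c' t') : c = c' ∧ t = t' := by
  constructor
  · funext j
    have := congrArg (fun g : Equiv.Perm (ZMod q × ZMod m) => (g (0, j)).1) h
    simpa [pct_apply] using this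
  · have := congrArg (fun g : Equiv.Perm (ZMod q × ZMod m) => (g (0, 0)).2) h
    simpa [pct_apply] using this

lemma alpha_pow {q m : ℕ} (n : ℕ) :
    (alpha : Equiv.Perm (ZMod q × ZMod m)) ^ n = pct 0 (n : ZMod m) := by
  induction n with
  | zero => simpa using pct_one.symm
  | succ n ih =>
      rw [pow_succ, ih, alpha_eq_pct, pct_mul]
      congr 1
      · funext j; simp
      · push_cast; ring

lemma shift_mem {q m : ℕ} [NeZero m] (C : Submodule (ZMod q) (ZMod m → ZMod q))
    (hcyc : ∀ c ∈ C, (fun j => c (j - 1)) ∈ C) :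
    ∀ t : ZMod m, ∀ c ∈ C, (fun j => c (j + t)) ∈ C := by
  have key : ∀ n : ℕ, ∀ c ∈ C, (fun j => c (j - (n : ZMod m))) ∈ C := by
    intro n
    induction n with
    | zero => intro c hc; simpa using hc
    | succ n ih =>
        intro c hc
        have := hcyc _ (ih c hc)
        convert this using 2 with j
        push_cast
        ring_nf
  intro t c hc
  have := key (-t).val c hc
  convert this using 2 with j
  rw [ZMod.natCast_val, ZMod.cast_id]
  ring

lemma mem_GC_iff {q m : ℕ} [NeZero m] (C : Submodule (ZMod q) (ZMod m → ZMod q))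
    (hsh : ∀ t : ZMod m, ∀ c ∈ C, (fun j => c (j + t)) ∈ C)
    (g : Equiv.Perm (ZMod q × ZMod m)) :
    g ∈ GC q m C ↔ ∃ c ∈ C, ∃ t : ZMod m, g = pct c t := by
  constructor
  · intro hg
    induction hg using Subgroup.closure_induction with
    | mem x hx =>
        rcases hx with hx | ⟨c, hc, rfl⟩
        · rcases hx with rfl
          exact ⟨0, C.zero_mem, 1, alpha_eq_pct⟩
        · exact ⟨c, hc, 0, beta_eq_pct c⟩
    | one => exact ⟨0, C.zero_mem, 0, pct_one.symm⟩
    | mul x y hx hy ihx ihy =>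
        obtain ⟨c, hc, t, rfl⟩ := ihx
        obtain ⟨c', hc', t', rfl⟩ := ihy
        exact ⟨fun j => c' j + c (j + t'), C.add_mem hc' (hsh t' c hc), t' + t, pct_mul ..⟩
    | inv x hx ihx =>
        obtain ⟨c, hc, t, rfl⟩ := ihx
        refine ⟨fun j => -c (j + -t), C.neg_mem (hsh (-t) c hc), -t, ?_⟩
        apply inv_eq_of_mul_eq_one_right
        rw [pct_mul]
        rw [show (fun j => (fun j => -c (j + -t)) j + c (j + -t)) = (0 : ZMod m → ZMod q) by
          funext j; simp]
        rw [show -t + t = 0 by ring, pct_one]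
  · rintro ⟨c, hc, t, rfl⟩
    have h1 : pct c t = pct 0 t * pct c 0 := by
      rw [pct_mul]
      congr 1
      · funext j; simp
      · simp
    have h2 : pct (0 : ZMod m → ZMod q) t = alpha ^ t.val := by
      rw [alpha_pow, ZMod.natCast_val, ZMod.cast_id]
    rw [h1, h2, ← beta_eq_pct]
    have hA : (alpha : Equiv.Perm (ZMod q × ZMod m)) ∈ GC q m C :=
      Subgroup.subset_closure (Or.inl rfl)
    have hB : beta c ∈ GC q m C := Subgroup.subset_closure (Or.inr ⟨c, hc, rfl⟩)
    exact mul_mem (pow_mem hA t.val) hB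

theorem stmt8 (q m : ℕ) (hq : q.Prime) [NeZero m]
    (C : Submodule (ZMod q) (ZMod m → ZMod q)) (hC : C ≠ ⊥)
    (hcyc : ∀ c ∈ C, (fun j => c (j - 1)) ∈ C) :
    (∀ x y : ZMod q × ZMod m, ∃ g ∈ GC q m C, g x = y) ∧
    Nat.card (GC q m C) = m * q ^ Module.finrank (ZMod q) C ∧
    (∀ v : ZMod q × ZMod m,
      ({g : Equiv.Perm (ZMod q × ZMod m) | g ∈ GC q m C ∧ g v = v}).ncard
        = q ^ (Module.finrank (ZMod q) C - 1)) := by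
  haveI : Fact q.Prime := ⟨hq⟩
  haveI : NeZero q := ⟨hq.ne_zero⟩
  have hsh := shift_mem C hcyc
  have hmem := mem_GC_iff C hsh
  -- existence of codewords with prescribed value at any coordinate
  have hex : ∀ j : ZMod m, ∀ x : ZMod q, ∃ c ∈ C, c j = x := by
    obtain ⟨c0, hc0, hc0ne⟩ := Submodule.exists_mem_ne_zero_of_ne_bot hC
    have : ∃ j0, c0 j0 ≠ 0 := by
      by_contra h
      push_neg at h
      exact hc0ne (funext h)
    obtain ⟨j0, hj0⟩ := this
    intro j x
    set c1 : ZMod m → ZMod q := fun y => c0 (y + (j0 - j)) with hc1def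
    have hc1 : c1 ∈ C := hsh (j0 - j) c0 hc0
    have hc1j : c1 j ≠ 0 := by
      simpa [hc1def] using hj0
    refine ⟨(x * (c1 j)⁻¹) • c1, C.smul_mem _ hc1, ?_⟩
    simp [mul_assoc, inv_mul_cancel₀ hc1j]
  -- cardinality of C
  haveI : Fintype C := Fintype.ofFinite _
  have hcardC : Nat.card C = q ^ Module.finrank (ZMod q) C := by
    rw [Nat.card_eq_fintype_card, Module.card_eq_pow_finrank (K := ZMod q) (V := C), ZMod.card]
  refine ⟨?_, ?_, ?_⟩
  · -- transitivity
    rintro ⟨i, j⟩ ⟨i', j'⟩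
    obtain ⟨c, hc, hcj⟩ := hex j (i' - i)
    refine ⟨pct c (j' - j), (hmem _).mpr ⟨c, hc, j' - j, rfl⟩, ?_⟩
    rw [pct_apply]
    simp [hcj]
  · -- order
    have hbij : Function.Bijective (fun ct : C × ZMod m =>
        (⟨pct ct.1.1 ct.2, (hmem _).mpr ⟨ct.1.1, ct.1.2, ct.2, rfl⟩⟩ : GC q m C)) := by
      constructor
      · rintro ⟨⟨c, hc⟩, t⟩ ⟨⟨c', hc'⟩, t'⟩ h
        have h' : pct c t = pct c' t' := congrArg Subtype.val h
        obtain ⟨h1, h2⟩ := pct_injective2 _ _ _ _ h'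
        simp [h1, h2]
      · rintro ⟨g, hg⟩
        obtain ⟨c, hc, t, rfl⟩ := (hmem g).mp hg
        exact ⟨⟨⟨c, hc⟩, t⟩, rfl⟩
    rw [← Nat.card_eq_of_bijective _ hbij, Nat.card_prod, hcardC, Nat.card_zmod, mul_comm]
  · -- stabilizers
    rintro ⟨i, j⟩
    set ev : C →ₗ[ZMod q] ZMod q := (LinearMap.proj j).comp C.subtype with hevdef
    have hev : ∀ c : C, ev c = (c : ZMod m → ZMod q) j := fun c => rfl
    have hsurj : Function.Surjective ev := by
      intro x
      obtain ⟨c, hc, hcj⟩ := hex j x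
      exact ⟨⟨c, hc⟩, hcj⟩
    have hrank : Module.finrank (ZMod q) (LinearMap.ker ev) =
        Module.finrank (ZMod q) C - 1 := by
      have h1 := LinearMap.finrank_range_add_finrank_ker ev
      rw [LinearMap.range_eq_top.mpr hsurj, finrank_top, Module.finrank_self] at h1
      omega
    haveI : Fintype (LinearMap.ker ev) := Fintype.ofFinite _
    have hcardker : Nat.card (LinearMap.ker ev) =
        q ^ (Module.finrank (ZMod q) C - 1) := by
      rw [Nat.card_eq_fintype_card,
        Module.card_eq_pow_finrank (K := ZMod q) (V := LinearMap.ker ev), ZMod.card, hrank]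
    rw [← Nat.card_coe_set_eq, ← hcardker]
    have Fmem : ∀ c : LinearMap.ker ev,
        pct (c.1.1) 0 ∈ GC q m C ∧ (pct (c.1.1) 0) (i, j) = (i, j) := by
      intro c
      refine ⟨(hmem _).mpr ⟨c.1.1, c.1.2, 0, rfl⟩, ?_⟩
      have hcj : (c.1 : ZMod m → ZMod q) j = 0 := c.2
      rw [pct_apply]
      simp [hcj]
    apply (Nat.card_eq_of_bijective (fun c : LinearMap.ker ev =>
      (⟨pct c.1.1 0, Fmem c⟩ :
        {g : Equiv.Perm (ZMod q × ZMod m) | g ∈ GC q m C ∧ g (i, j) = (i, j)})) ?_).symm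
    · constructor
      · rintro ⟨⟨c, hc⟩, hck⟩ ⟨⟨c', hc'⟩, hck'⟩ h
        have h' : pct c 0 = pct c' 0 := congrArg Subtype.val h
        obtain ⟨h1, -⟩ := pct_injective2 _ _ _ _ h'
        simp [Subtype.ext_iff, h1]
      · rintro ⟨g, hg, hgv⟩
        obtain ⟨c, hc, t, rfl⟩ := (hmem g).mp hg
        rw [pct_apply] at hgv
        have ht : t = 0 := by
          have := congrArg Prod.snd hgv
          simpa using this
        have hcj : c j = 0 := by
          have := congrArg Prod.fst hgv
          simpa using this
        refine ⟨⟨⟨c, hc⟩, ?_⟩, ?_⟩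
        · exact hcj
        · simp [ht]
end

section
/- If a transitive permutation group G of degree n contains a semiregular subgroup H with exactly t orbits (all of size n/t), then every intersecting set F in G satisfies |F| ≤ t·|G|/n, i.e., ρ(G) ≤ t. -/
/-- A set of permutations is intersecting if any two of its elements agree at some point. -/
def Intersecting {V : Type*} (F : Set (Equiv.Perm V)) : Prop :=
  ∀ g ∈ F, ∀ h ∈ F, ∃ v, g v = h v

theorem stmt15 {V : Type*} [Fintype V] (G H : Subgroup (Equiv.Perm V)) (hHG : H ≤ G)
    (htrans : ∀ u w : V, ∃ g ∈ G, g u = w)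
    (hsemi : ∀ h ∈ H, h ≠ 1 → ∀ v : V, h v ≠ v)
    (t : ℕ) (ht : Nat.card (Quotient (MulAction.orbitRel H V)) = t)
    (F : Set (Equiv.Perm V)) (hF : F ⊆ ↑G) (hFint : Intersecting F) :
    F.ncard * Fintype.card V ≤ t * Nat.card G := by
  classical
  -- stabilizers are trivial
  have hstab : ∀ v : V, MulAction.stabilizer H v = ⊥ := by
    intro v
    ext h
    simp only [MulAction.mem_stabilizer_iff, Subgroup.mem_bot]
    constructor
    · intro hv
      by_contra hne
      have hne' : (h : Equiv.Perm V) ≠ 1 :=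
        fun he => hne (Subtype.ext (by simp [he]))
      exact hsemi h h.2 hne' v hv
    · rintro rfl; simp
  -- card V = t * card H
  have e1 : V ≃ (Quotient (MulAction.orbitRel H V)) × H := by
    refine (MulAction.selfEquivSigmaOrbitsQuotientStabilizer H V).trans ?_
    refine (Equiv.sigmaCongrRight fun ω => ?_).trans (Equiv.sigmaEquivProd _ _)
    exact (Subgroup.quotientEquivOfEq (hstab _)).trans (QuotientGroup.quotientBot (G := H)).toEquiv
  have hcardV : Fintype.card V = t * Nat.card H := by
    rw [← Nat.card_eq_fintype_card, Nat.card_congr e1, Nat.card_prod, ht]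
  -- injective map from F to cosets of H in G
  set K := H.subgroupOf G with hK
  have hinj : Function.Injective (fun f : F => (QuotientGroup.mk (⟨f, hF f.2⟩ : G) : G ⧸ K)) := by
    intro x y hxy
    have hmem : ((⟨x, hF x.2⟩ : G)⁻¹ * ⟨y, hF y.2⟩) ∈ K := QuotientGroup.eq.mp hxy
    have hmem' : ((x : Equiv.Perm V)⁻¹ * y) ∈ H := hmem
    obtain ⟨v, hv⟩ := hFint x x.2 y y.2
    have hfix : ((x : Equiv.Perm V)⁻¹ * y) v = v := by
      simp [Equiv.Perm.mul_apply, ← hv]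
    have h1 : ((x : Equiv.Perm V)⁻¹ * (y : Equiv.Perm V)) = 1 := by
      by_contra hne
      exact hsemi _ hmem' hne v hfix
    have : (x : Equiv.Perm V) = y := by
      have := mul_eq_one_iff_inv_eq.mp h1
      simp at this
      exact this
    exact Subtype.ext this
  have hFle : F.ncard ≤ Nat.card (G ⧸ K) := by
    rw [← Nat.card_coe_set_eq]
    exact Nat.card_le_card_of_injective _ hinj
  have hKH : Nat.card K = Nat.card H := Nat.card_congr (Subgroup.subgroupOfEquivOfLe hHG).toEquiv
  have hG : Nat.card G = Nat.card (G ⧸ K) * Nat.card H := by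
    rw [← hKH]; exact Subgroup.card_eq_card_quotient_mul_card_subgroup K
  calc F.ncard * Fintype.card V = F.ncard * (t * Nat.card H) := by rw [hcardV]
    _ ≤ Nat.card (G ⧸ K) * (t * Nat.card H) := Nat.mul_le_mul_right _ hFle
    _ = t * (Nat.card (G ⧸ K) * Nat.card H) := by ring
    _ = t * Nat.card G := by rw [hG]
end
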